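/- Minimax for the max-entropy: for ρ_{AB} subnormalized with purification ρ_{ABC}, min_{Z: ρ_{ABC} ≤ Z_{AB}⊗id_C} max_{σ_B} tr[(id_A⊗σ_B) Z_{AB}] = max_{σ_B} min_{Z: ρ_{ABC} ≤ Z_{AB}⊗id_C} tr[(id_A⊗σ_B) Z_{AB}], where σ_B ranges over subnormalized density operators and Z_{AB} over positive semidefinite operators. -/

import Mathlib

open Matrix Kronecker ComplexOrder

noncomputable section


open scoped Classical
namespace QIT

/-- Square root of a positive semidefinite matrix (junk value `0` otherwise). -/
noncomputable def msqrt {n : Type*} [Fintype n] [DecidableEq n] (A : Matrix n n ℂ) :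
    Matrix n n ℂ :=
  if h : A.PosSemidef then
    (h.1.eigenvectorUnitary : Matrix n n ℂ) *
      Matrix.diagonal ((↑) ∘ (Real.sqrt ·) ∘ h.1.eigenvalues) *
      (star h.1.eigenvectorUnitary : Matrix n n ℂ)
  else 0

/-- Trace norm `‖A‖₁ = tr √(Aᴴ A)`. -/
noncomputable def traceNorm {n : Type*} [Fintype n] [DecidableEq n] (A : Matrix n n ℂ) : ℝ :=
  ((msqrt (Aᴴ * A)).trace).re

/-- Fidelity `F(ρ,σ) = ‖√ρ √σ‖₁`. -/
noncomputable def fidelity {n : Type*} [Fintype n] [DecidableEq n] (ρ σ : Matrix n n ℂ) : ℝ :=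
  traceNorm (msqrt ρ * msqrt σ)

/-- Generalized fidelity. -/
noncomputable def gFid {n : Type*} [Fintype n] [DecidableEq n] (ρ σ : Matrix n n ℂ) : ℝ :=
  fidelity ρ σ + Real.sqrt ((1 - ρ.trace.re) * (1 - σ.trace.re))

/-- Purified distance. -/
noncomputable def pDist {n : Type*} [Fintype n] [DecidableEq n] (ρ σ : Matrix n n ℂ) : ℝ :=
  Real.sqrt (1 - (gFid ρ σ) ^ 2)

/-- Subnormalized density operator. -/
def SubNormalized {n : Type*} [Fintype n] (ρ : Matrix n n ℂ) : Prop :=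
  ρ.PosSemidef ∧ ρ.trace.re ≤ 1

/-- Loewner order `A ≤ B`. -/
def mLE {n : Type*} [Fintype n] (A B : Matrix n n ℂ) : Prop := (B - A).PosSemidef

/-- Functional calculus for Hermitian matrices (junk value `0` otherwise). -/
noncomputable def cfcHerm {n : Type*} [Fintype n] [DecidableEq n] (A : Matrix n n ℂ)
    (f : ℝ → ℝ) : Matrix n n ℂ :=
  if hA : A.IsHermitian then
    (hA.eigenvectorUnitary : Matrix n n ℂ) *
      Matrix.diagonal (fun i => (f (hA.eigenvalues i) : ℂ)) *
      (star ((hA.eigenvectorUnitary : Matrix n n ℂ)))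
  else 0

/-- Projector onto the strictly negative eigenspaces of a Hermitian matrix. -/
noncomputable def negProj {n : Type*} [Fintype n] [DecidableEq n] (A : Matrix n n ℂ) :
    Matrix n n ℂ :=
  cfcHerm A (fun x => if x < 0 then 1 else 0)

/-- Projector onto the nonnegative eigenspaces of a Hermitian matrix. -/
noncomputable def posProj {n : Type*} [Fintype n] [DecidableEq n] (A : Matrix n n ℂ) :
    Matrix n n ℂ :=
  cfcHerm A (fun x => if 0 ≤ x then 1 else 0)

/-- Partial trace over the second (right) factor. -/
noncomputable def ptraceRight {a b : Type*} [Fintype a] [Fintype b]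
    (M : Matrix (a × b) (a × b) ℂ) : Matrix a a ℂ :=
  Matrix.of fun i j => ∑ k, M (i, k) (j, k)

/-- Partial trace over the first (left) factor. -/
noncomputable def ptraceLeft {a b : Type*} [Fintype a] [Fintype b]
    (M : Matrix (a × b) (a × b) ℂ) : Matrix b b ℂ :=
  Matrix.of fun i j => ∑ k, M (k, i) (k, j)

/-- Conditional min-entropy `H_min(A|B)_ρ`, conditioning on the second factor. -/
noncomputable def Hmin {a b : Type*} [Fintype a] [Fintype b] [DecidableEq a] [DecidableEq b]
    (ρ : Matrix (a × b) (a × b) ℂ) : ℝ :=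
  sSup {l : ℝ | ∃ σ : Matrix b b ℂ, SubNormalized σ ∧
    mLE ρ ((((2 : ℝ) ^ (-l) : ℝ)) • ((1 : Matrix a a ℂ) ⊗ₖ σ))}

/-- Relative conditional max-entropy `H_max(A|B)_{ρ|σ}`. -/
noncomputable def HmaxRel {a b : Type*} [Fintype a] [Fintype b] [DecidableEq a] [DecidableEq b]
    (ρ : Matrix (a × b) (a × b) ℂ) (σ : Matrix b b ℂ) : ℝ :=
  Real.logb 2 ((fidelity ρ ((1 : Matrix a a ℂ) ⊗ₖ σ)) ^ 2)

/-- Conditional max-entropy `H_max(A|B)_ρ`. -/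
noncomputable def Hmax {a b : Type*} [Fintype a] [Fintype b] [DecidableEq a] [DecidableEq b]
    (ρ : Matrix (a × b) (a × b) ℂ) : ℝ :=
  sSup {x : ℝ | ∃ σ : Matrix b b ℂ, SubNormalized σ ∧ x = HmaxRel ρ σ}

/-- Smooth conditional min-entropy. -/
noncomputable def sHmin {a b : Type*} [Fintype a] [Fintype b] [DecidableEq a] [DecidableEq b]
    (ε : ℝ) (ρ : Matrix (a × b) (a × b) ℂ) : ℝ :=
  sSup {x : ℝ | ∃ ρ' : Matrix (a × b) (a × b) ℂ,
    SubNormalized ρ' ∧ pDist ρ' ρ ≤ ε ∧ x = Hmin ρ'}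

/-- Smooth conditional max-entropy. -/
noncomputable def sHmax {a b : Type*} [Fintype a] [Fintype b] [DecidableEq a] [DecidableEq b]
    (ε : ℝ) (ρ : Matrix (a × b) (a × b) ℂ) : ℝ :=
  sInf {x : ℝ | ∃ ρ' : Matrix (a × b) (a × b) ℂ,
    SubNormalized ρ' ∧ pDist ρ' ρ ≤ ε ∧ x = Hmax ρ'}

/-- Operator norm of a Hermitian (in particular PSD) matrix: largest eigenvalue. -/
noncomputable def opNormPSD {n : Type*} [Fintype n] [DecidableEq n] (A : Matrix n n ℂ) : ℝ :=
  if hA : A.IsHermitian then ⨆ i, hA.eigenvalues i else 0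

end QIT

/-! The pairing `(σ, Z) ↦ Re tr[(1 ⊗ σ) Z]` is real-bilinear, the subnormalized states form a
compact convex set, and the feasible `Z` form a convex set, nonempty because `Z = tr ρ • 1` is
feasible for every positive semidefinite `ρ`, on which the pairing is nonnegative.
So the von Neumann–Sion minimax theorem applies. -/

open scoped MatrixOrder

theorem Set.ofPred_exists_and_eq_eq_image {α β : Type*} (p : α → Prop) (f : α → β) :
    {x | ∃ y, p y ∧ x = f y} = f '' {y | p y} := by
  ext; simp [eq_comm]

theorem Sion.sInf_sSup_eq_sSup_sInf {E F : Type*}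
    [TopologicalSpace E] [AddCommGroup E] [Module ℝ E] [IsTopologicalAddGroup E]
    [ContinuousSMul ℝ E] [TopologicalSpace F] [AddCommGroup F] [Module ℝ F]
    [IsTopologicalAddGroup F] [ContinuousSMul ℝ F]
    {X : Set E} {Y : Set F} {g : E → F → ℝ}
    (neX : X.Nonempty) (kX : IsCompact X) (cX : Convex ℝ X) (neY : Y.Nonempty) (cY : Convex ℝ Y)
    (hgx : ∀ y ∈ Y, UpperSemicontinuousOn (g · y) X)
    (hgx' : ∀ y ∈ Y, QuasiconcaveOn ℝ X (g · y))
    (hgy : ∀ x ∈ X, LowerSemicontinuousOn (g x) Y)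
    (hgy' : ∀ x ∈ X, QuasiconvexOn ℝ Y (g x))
    (hbdd : ∀ x ∈ X, BddBelow (g x '' Y)) :
    sInf ((fun y => sSup ((g · y) '' X)) '' Y) = sSup ((fun x => sInf (g x '' Y)) '' X) := by
  have hsup : ∀ y ∈ Y, IsLUB ((g · y) '' X) (sSup ((g · y) '' X)) := fun y hy => by
    obtain ⟨x, hx, hmax⟩ := (hgx y hy).exists_isMaxOn neX kX
    exact isLUB_csSup (neX.image _) (hmax.isLUB hx).bddAbove
  have hinf : ∀ x ∈ X, IsGLB (g x '' Y) (sInf (g x '' Y)) := fun x hx =>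
    isGLB_csInf (neY.image _) (hbdd x hx)
  obtain ⟨x₀, hx₀⟩ := neX
  obtain ⟨y₀, hy₀⟩ := neY
  have hlower : sInf (g x₀ '' Y) ∈ lowerBounds ((fun y => sSup ((g · y) '' X)) '' Y) := by
    rintro _ ⟨y, hy, rfl⟩
    exact ((hinf x₀ hx₀).1 ⟨y, hy, rfl⟩).trans ((hsup y hy).1 ⟨x₀, hx₀, rfl⟩)
  have hupper : sSup ((g · y₀) '' X) ∈ upperBounds ((fun x => sInf (g x '' Y)) '' X) := by
    rintro _ ⟨x, hx, rfl⟩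
    exact ((hinf x hx).1 ⟨y₀, hy₀, rfl⟩).trans ((hsup y₀ hy₀).1 ⟨x, hx, rfl⟩)
  -- In `ℝᵒᵈ`, Sion's `inf_x sup_y` is our `sup_x inf_y`: there the compact set is the max player.
  exact (Sion.minimax (f := fun x y => OrderDual.toDual (g x y)) ⟨x₀, hx₀⟩ kX hgx hgx' cY hgy
    hgy' cX _ hinf _ (isLUB_csSup (Set.image_nonempty.mpr ⟨x₀, hx₀⟩) ⟨_, hupper⟩)
    _ hsup _ (isGLB_csInf (Set.image_nonempty.mpr ⟨y₀, hy₀⟩) ⟨_, hlower⟩)).symm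

theorem LinearMap.sInf_sSup_eq_sSup_sInf {E F : Type*}
    [TopologicalSpace E] [AddCommGroup E] [Module ℝ E] [IsTopologicalAddGroup E]
    [ContinuousSMul ℝ E] [T2Space E] [FiniteDimensional ℝ E]
    [TopologicalSpace F] [AddCommGroup F] [Module ℝ F]
    [IsTopologicalAddGroup F] [ContinuousSMul ℝ F] [T2Space F] [FiniteDimensional ℝ F]
    (B : E →ₗ[ℝ] F →ₗ[ℝ] ℝ) {X : Set E} {Y : Set F}
    (neX : X.Nonempty) (kX : IsCompact X) (cX : Convex ℝ X) (neY : Y.Nonempty) (cY : Convex ℝ Y)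
    (hbdd : ∀ x ∈ X, BddBelow (B x '' Y)) :
    sInf ((fun y => sSup ((B · y) '' X)) '' Y) = sSup ((fun x => sInf (B x '' Y)) '' X) :=
  Sion.sInf_sSup_eq_sSup_sInf neX kX cX neY cY
    (fun y _ => (B.flip y).continuous_of_finiteDimensional.continuousOn.upperSemicontinuousOn)
    (fun y _ => ((B.flip y).concaveOn cX).quasiconcaveOn)
    (fun x _ => (B x).continuous_of_finiteDimensional.continuousOn.lowerSemicontinuousOn)
    (fun x _ => ((B x).convexOn cY).quasiconvexOn) hbdd

namespace Matrix

variable {n : Type*} [Fintype n]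

theorem isClosed_setOfPred_posSemidef : IsClosed {A : Matrix n n ℂ | A.PosSemidef} := by
  simp only [posSemidef_iff_dotProduct_mulVec, Set.ofPred_and, Set.ofPred_forall]
  refine (isClosed_eq continuous_id.matrix_conjTranspose continuous_id).inter
    (isClosed_iInter fun x => isClosed_le continuous_const ?_)
  exact continuous_const.dotProduct (continuous_id.matrix_mulVec continuous_const)

theorem PosSemidef.norm_apply_le {A : Matrix n n ℂ} (hA : A.PosSemidef) (i j : n) :
    ‖A i j‖ ≤ ((A i i).re + (A j j).re) / 2 := by
  obtain ⟨B, rfl⟩ := CStarAlgebra.nonneg_iff_eq_star_mul_self.mp hA.nonneg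
  have hdiag : ∀ l, ((star B * B) l l).re = ∑ k, ‖B k l‖ ^ 2 := fun l => by
    simp [Matrix.mul_apply, Complex.re_sum, ← Complex.normSq_eq_norm_sq, Complex.normSq_apply]
  rw [hdiag, hdiag, ← Finset.sum_add_distrib, Finset.sum_div]
  calc ‖(star B * B) i j‖ ≤ ∑ k, ‖B k i‖ * ‖B k j‖ := by
        simpa [Matrix.mul_apply] using norm_sum_le Finset.univ fun k => star (B k i) * B k j
    _ ≤ _ := Finset.sum_le_sum fun k _ => by nlinarith [two_mul_le_add_sq ‖B k i‖ ‖B k j‖]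

theorem PosSemidef.re_apply_le_re_trace {A : Matrix n n ℂ} (hA : A.PosSemidef) (i : n) :
    (A i i).re ≤ A.trace.re := by
  rw [trace, Complex.re_sum]
  exact Finset.single_le_sum (f := fun j => (A j j).re)
    (fun j _ => (Complex.nonneg_iff.mp hA.diag_nonneg).1) (Finset.mem_univ i)

theorem isCompact_setOfPred_posSemidef_re_trace_le (r : ℝ) :
    IsCompact {A : Matrix n n ℂ | A.PosSemidef ∧ A.trace.re ≤ r} := by
  have hclosed : IsClosed {A : Matrix n n ℂ | A.PosSemidef ∧ A.trace.re ≤ r} :=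
    isClosed_setOfPred_posSemidef.inter
      (isClosed_le (Complex.continuous_re.comp continuous_id.matrix_trace) continuous_const)
  refine (isCompact_univ_pi fun _ => isCompact_univ_pi fun _ =>
    isCompact_closedBall 0 r).of_isClosed_subset hclosed ?_
  rintro A ⟨hA, hr⟩ i - j -
  rw [mem_closedBall_zero_iff]
  linarith [hA.norm_apply_le i j, hA.re_apply_le_re_trace i, hA.re_apply_le_re_trace j]

theorem convex_setOfPred_posSemidef_re_trace_le (r : ℝ) :
    Convex ℝ {A : Matrix n n ℂ | A.PosSemidef ∧ A.trace.re ≤ r} := by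
  rintro A ⟨hA, hAr⟩ B ⟨hB, hBr⟩ s t hs ht hst
  refine ⟨(hA.smul hs).add (hB.smul ht), ?_⟩
  simp only [trace_add, trace_smul, Complex.add_re, Complex.smul_re, smul_eq_mul]
  calc s * A.trace.re + t * B.trace.re ≤ s * r + t * r := by gcongr
    _ = r := by rw [← add_mul, hst, one_mul]

theorem PosSemidef.re_trace_mul_nonneg {A B : Matrix n n ℂ} (hA : A.PosSemidef)
    (hB : B.PosSemidef) : 0 ≤ (A * B).trace.re := by
  obtain ⟨C, rfl⟩ := CStarAlgebra.nonneg_iff_eq_star_mul_self.mp hA.nonneg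
  rw [Matrix.mul_assoc, trace_mul_comm]
  exact (Complex.nonneg_iff.mp (hB.mul_mul_conjTranspose_same C).trace_nonneg).1

theorem PosSemidef.re_trace_smul_one_sub [DecidableEq n] {A : Matrix n n ℂ}
    (hA : A.PosSemidef) : (A.trace.re • (1 : Matrix n n ℂ) - A).PosSemidef := by
  rw [← le_iff, ← Algebra.algebraMap_eq_smul_one]
  refine le_algebraMap_of_spectrum_le (fun x hx => ?_) hA.isHermitian
  obtain ⟨i, rfl⟩ := hA.isHermitian.spectrum_real_eq_range_eigenvalues ▸ hx
  rw [hA.isHermitian.trace_eq_sum_eigenvalues, Complex.re_sum]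
  simpa using Finset.single_le_sum (fun j _ => hA.eigenvalues_nonneg j) (Finset.mem_univ i)

end Matrix

namespace QIT

theorem convex_setOfPred_posSemidef_mLE_kronecker_one {m c : Type*} [Fintype m]
    [Fintype c] [DecidableEq c] (ρ : Matrix (m × c) (m × c) ℂ) :
    Convex ℝ {Z : Matrix m m ℂ | Z.PosSemidef ∧ mLE ρ (Z ⊗ₖ (1 : Matrix c c ℂ))} := by
  rintro Y ⟨hY, hYρ⟩ Z ⟨hZ, hZρ⟩ s t hs ht hst
  refine ⟨(hY.smul hs).add (hZ.smul ht), ?_⟩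
  have hsplit : (s • Y + t • Z) ⊗ₖ (1 : Matrix c c ℂ) - ρ =
      s • (Y ⊗ₖ (1 : Matrix c c ℂ) - ρ) + t • (Z ⊗ₖ (1 : Matrix c c ℂ) - ρ) := by
    rw [add_kronecker, smul_kronecker, smul_kronecker, smul_sub, smul_sub,
      sub_add_sub_comm, ← add_smul, hst, one_smul]
  rw [mLE, hsplit]
  exact (hYρ.smul hs).add (hZρ.smul ht)

theorem exists_posSemidef_mLE_kronecker_one {m c : Type*} [Fintype m] [Fintype c]
    [DecidableEq m] [DecidableEq c] {ρ : Matrix (m × c) (m × c) ℂ} (hρ : ρ.PosSemidef) :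
    ∃ Z : Matrix m m ℂ, Z.PosSemidef ∧ mLE ρ (Z ⊗ₖ (1 : Matrix c c ℂ)) := by
  refine ⟨ρ.trace.re • 1, PosSemidef.one.smul (Complex.nonneg_iff.mp hρ.trace_nonneg).1, ?_⟩
  rw [mLE, smul_kronecker, one_kronecker_one]
  exact hρ.re_trace_smul_one_sub

variable {a b : Type*} [Fintype a] [Fintype b] [DecidableEq a]

def oneKroneckerTraceForm : Matrix b b ℂ →ₗ[ℝ] Matrix (a × b) (a × b) ℂ →ₗ[ℝ] ℝ :=
  LinearMap.mk₂ ℝ (fun σ Z => (((1 : Matrix a a ℂ) ⊗ₖ σ) * Z).trace.re)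
    (fun σ τ Z => by simp [kronecker_add, Matrix.add_mul])
    (fun r σ Z => by simp [kronecker_smul])
    (fun σ Y Z => by simp [Matrix.mul_add])
    (fun r σ Z => by simp)

theorem oneKroneckerTraceForm_nonneg {σ : Matrix b b ℂ} {Z : Matrix (a × b) (a × b) ℂ}
    (hσ : σ.PosSemidef) (hZ : Z.PosSemidef) : 0 ≤ oneKroneckerTraceForm σ Z :=
  (PosSemidef.one.kronecker hσ).re_trace_mul_nonneg hZ

end QIT

open QIT in
theorem stmt11_general {a b c : Type*} [Fintype a] [Fintype b] [Fintype c]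
    [DecidableEq a] [DecidableEq b] [DecidableEq c]
    (ρABC : Matrix ((a × b) × c) ((a × b) × c) ℂ)
    (hpure : ∃ v : (a × b) × c → ℂ, ρABC = Matrix.vecMulVec v (star v)) :
    sInf {x : ℝ | ∃ Z : Matrix (a × b) (a × b) ℂ, Z.PosSemidef ∧
        mLE ρABC (Z ⊗ₖ (1 : Matrix c c ℂ)) ∧
        x = sSup {y : ℝ | ∃ σ : Matrix b b ℂ, SubNormalized σ ∧
          y = ((((1 : Matrix a a ℂ) ⊗ₖ σ) * Z).trace).re}} =
    sSup {x : ℝ | ∃ σ : Matrix b b ℂ, SubNormalized σ ∧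
        x = sInf {y : ℝ | ∃ Z : Matrix (a × b) (a × b) ℂ, Z.PosSemidef ∧
          mLE ρABC (Z ⊗ₖ (1 : Matrix c c ℂ)) ∧
          y = ((((1 : Matrix a a ℂ) ⊗ₖ σ) * Z).trace).re}} := by
  obtain ⟨v, rfl⟩ := hpure
  have hfeasible := exists_posSemidef_mLE_kronecker_one (posSemidef_vecMulVec_self_star v)
  simp only [← and_assoc, Set.ofPred_exists_and_eq_eq_image]
  exact LinearMap.sInf_sSup_eq_sSup_sInf oneKroneckerTraceForm (X := {σ | SubNormalized σ})
    (Y := {Z | Z.PosSemidef ∧ mLE _ (Z ⊗ₖ (1 : Matrix c c ℂ))})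
    ⟨0, PosSemidef.zero, by simp⟩ (isCompact_setOfPred_posSemidef_re_trace_le 1)
    (convex_setOfPred_posSemidef_re_trace_le 1) hfeasible
    (convex_setOfPred_posSemidef_mLE_kronecker_one _)
    fun σ hσ => ⟨0, by
      rintro _ ⟨Z, hZ, rfl⟩
      exact oneKroneckerTraceForm_nonneg hσ.1 hZ.1⟩

open QIT in
/-- Minimax for the max-entropy SDP. -/
theorem stmt11 {a b c : Type*} [Fintype a] [Fintype b] [Fintype c]
    [DecidableEq a] [DecidableEq b] [DecidableEq c]
    (ρAB : Matrix (a × b) (a × b) ℂ) (hρ : SubNormalized ρAB)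
    (ρABC : Matrix ((a × b) × c) ((a × b) × c) ℂ)
    (hpure : ∃ v : (a × b) × c → ℂ, ρABC = Matrix.vecMulVec v (star v))
    (hptr : ptraceRight ρABC = ρAB) :
    sInf {x : ℝ | ∃ Z : Matrix (a × b) (a × b) ℂ, Z.PosSemidef ∧
        mLE ρABC (Z ⊗ₖ (1 : Matrix c c ℂ)) ∧
        x = sSup {y : ℝ | ∃ σ : Matrix b b ℂ, SubNormalized σ ∧
          y = ((((1 : Matrix a a ℂ) ⊗ₖ σ) * Z).trace).re}} =
    sSup {x : ℝ | ∃ σ : Matrix b b ℂ, SubNormalized σ ∧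
        x = sInf {y : ℝ | ∃ Z : Matrix (a × b) (a × b) ℂ, Z.PosSemidef ∧
          mLE ρABC (Z ⊗ₖ (1 : Matrix c c ℂ)) ∧
          y = ((((1 : Matrix a a ℂ) ⊗ₖ σ) * Z).trace).re}} :=
  stmt11_general ρABC hpure
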